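/- arXiv:1807.00730 — 6 statements merged into one kernel-verified Lean document; each statement's English description precedes it below -/
import Mathlib

section
/- Let $v, w \in L^1[0,1]$ be non-negative integrable functions such that $\int_t^1 w(x)\,dx > 0$ for all $t < 1$ and likewise for $v$, and such that $\lim_{t \to 1^-} v(t)/w(t) = 1$ (with the convention $0/0 = 1$). Then $\lim_{n \to \infty} \frac{\int_0^1 t^n v(t)\,dt}{\int_0^1 t^n w(t)\,dt} = 1$. -/
open MeasureTheory Set Filter Asymptotics intervalIntegral Topology

/-!
The hypothesis on `v / w` says that `v - w = o(w)` as `t → 1⁻`, and this transfers to moments.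
Split the `n`-th moment of `h = v - w` at a point `a < 1` beyond which `|h| ≤ ε w`: the part over
`[a, 1]` is at most `ε` times the moment of `w`, the part over `[0, a]` is `O(aⁿ)`, and positivity
of the tails of `w` bounds its moment below by `bⁿ ∫_b^1 w` for every `b ∈ (a, 1)`, so the `O(aⁿ)`
part is negligible.
-/

noncomputable def moment (f : ℝ → ℝ) (n : ℕ) : ℝ := ∫ t in (0:ℝ)..1, t ^ n * f t

lemma isEquivalent_of_tendsto_div_ite {α : Type*} {l : Filter α} {v w : α → ℝ}
    (h : Tendsto (fun t => if v t = 0 ∧ w t = 0 then 1 else v t / w t) l (𝓝 1)) :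
    v ~[l] w := by
  refine isLittleO_iff.2 fun c hc => ?_
  filter_upwards [Metric.tendsto_nhds.1 h (min c 1) (by positivity)] with t ht
  by_cases h0 : v t = 0 ∧ w t = 0
  · simp [h0]
  rw [if_neg h0, Real.dist_eq] at ht
  have hw : w t ≠ 0 := by
    rintro hw
    simp [hw] at ht
  calc ‖(v - w) t‖ = |v t / w t - 1| * |w t| := by
        rw [Pi.sub_apply, Real.norm_eq_abs, ← abs_mul, sub_mul, div_mul_cancel₀ _ hw, one_mul]
    _ ≤ c * ‖w t‖ := mul_le_mul_of_nonneg_right (ht.le.trans (min_le_left _ _)) (abs_nonneg _)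

section

variable {f h w : ℝ → ℝ}

lemma intervalIntegrable_of_integrableOn_Icc (hf : IntegrableOn f (Icc 0 1)) {a b : ℝ}
    (ha : a ∈ Icc (0:ℝ) 1) (hb : b ∈ Icc (0:ℝ) 1) : IntervalIntegrable f volume a b :=
  (hf.mono_set (uIcc_subset_Icc ha hb)).intervalIntegrable

lemma intervalIntegrable_pow_mul (hf : IntegrableOn f (Icc 0 1)) (n : ℕ) {a b : ℝ}
    (ha : a ∈ Icc (0:ℝ) 1) (hb : b ∈ Icc (0:ℝ) 1) :
    IntervalIntegrable (fun t => t ^ n * f t) volume a b :=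
  intervalIntegrable_of_integrableOn_Icc
    (hf.continuousOn_mul (continuous_pow n).continuousOn isCompact_Icc) ha hb

lemma moment_sub (hf : IntegrableOn f (Icc 0 1)) (hw : IntegrableOn w (Icc 0 1)) :
    moment (f - w) = moment f - moment w := by
  have h0 : (0:ℝ) ∈ Icc (0:ℝ) 1 := ⟨le_rfl, zero_le_one⟩
  have h1 : (1:ℝ) ∈ Icc (0:ℝ) 1 := ⟨zero_le_one, le_rfl⟩
  funext n
  simp only [moment, Pi.sub_apply, mul_sub]
  exact integral_sub (intervalIntegrable_pow_mul hf n h0 h1) (intervalIntegrable_pow_mul hw n h0 h1)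

lemma norm_integral_pow_mul_le (hf : IntegrableOn f (Icc 0 1)) (n : ℕ) {a : ℝ}
    (ha : a ∈ Icc (0:ℝ) 1) :
    ‖∫ t in (0:ℝ)..a, t ^ n * f t‖ ≤ a ^ n * ∫ t in (0:ℝ)..1, |f t| := by
  have hf01 := intervalIntegrable_of_integrableOn_Icc hf ⟨le_rfl, zero_le_one⟩ ⟨zero_le_one, le_rfl⟩
  calc ‖∫ t in (0:ℝ)..a, t ^ n * f t‖ ≤ ∫ t in (0:ℝ)..a, a ^ n * |f t| := by
        refine norm_integral_le_of_norm_le ha.1 (ae_of_all _ fun t ht => ?_)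
          ((intervalIntegrable_of_integrableOn_Icc hf ⟨le_rfl, zero_le_one⟩ ha).abs.const_mul _)
        rw [norm_mul, norm_pow, Real.norm_of_nonneg ht.1.le, Real.norm_eq_abs]
        exact mul_le_mul_of_nonneg_right (pow_le_pow_left₀ ht.1.le ht.2 n) (abs_nonneg _)
    _ = a ^ n * ∫ t in (0:ℝ)..a, |f t| := intervalIntegral.integral_const_mul _ _
    _ ≤ a ^ n * ∫ t in (0:ℝ)..1, |f t| := by
        gcongr
        · exact pow_nonneg ha.1 n
        · exact integral_mono_interval le_rfl ha.1 ha.2 (ae_of_all _ fun _ => abs_nonneg _) hf01.abs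

variable (hw : IntegrableOn w (Icc 0 1)) (hw0 : ∀ t ∈ Icc (0:ℝ) 1, 0 ≤ w t)
include hw hw0

lemma integral_pow_mul_le_moment (n : ℕ) {a b : ℝ} (ha : 0 ≤ a) (hab : a ≤ b) (hb : b ≤ 1) :
    ∫ t in a..b, t ^ n * w t ≤ moment w n :=
  integral_mono_interval ha hab hb
    ((ae_restrict_iff' measurableSet_Ioc).2 <| ae_of_all _ fun t ht =>
      mul_nonneg (pow_nonneg ht.1.le n) (hw0 t (Ioc_subset_Icc_self ht)))
    (intervalIntegrable_pow_mul hw n ⟨le_rfl, zero_le_one⟩ ⟨zero_le_one, le_rfl⟩)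

lemma pow_mul_integral_le_moment (n : ℕ) {b : ℝ} (hb : b ∈ Icc (0:ℝ) 1) :
    b ^ n * ∫ t in b..1, w t ≤ moment w n := by
  have h1 : (1:ℝ) ∈ Icc (0:ℝ) 1 := ⟨zero_le_one, le_rfl⟩
  calc b ^ n * ∫ t in b..1, w t = ∫ t in b..1, b ^ n * w t :=
        (intervalIntegral.integral_const_mul _ _).symm
    _ ≤ ∫ t in b..1, t ^ n * w t :=
        integral_mono_on hb.2 ((intervalIntegrable_of_integrableOn_Icc hw hb h1).const_mul _)
          (intervalIntegrable_pow_mul hw n hb h1) fun t ht =>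
            mul_le_mul_of_nonneg_right (pow_le_pow_left₀ hb.1 ht.1 n)
              (hw0 t ⟨hb.1.trans ht.1, ht.2⟩)
    _ ≤ moment w n := integral_pow_mul_le_moment hw hw0 n hb.1 hb.2 le_rfl

lemma moment_pos (n : ℕ) {b : ℝ} (hb : b ∈ Ioc (0:ℝ) 1) (hpos : 0 < ∫ t in b..1, w t) :
    0 < moment w n :=
  (mul_pos (pow_pos hb.1 n) hpos).trans_le
    (pow_mul_integral_le_moment hw hw0 n (Ioc_subset_Icc_self hb))

lemma norm_integral_pow_mul_le_mul_moment (n : ℕ) {a ε : ℝ}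
    (ha : a ∈ Icc (0:ℝ) 1) (hε : 0 ≤ ε) (hbound : ∀ t ∈ Ioo a 1, ‖h t‖ ≤ ε * w t) :
    ‖∫ t in a..1, t ^ n * h t‖ ≤ ε * moment w n := by
  have h1 : (1:ℝ) ∈ Icc (0:ℝ) 1 := ⟨zero_le_one, le_rfl⟩
  calc ‖∫ t in a..1, t ^ n * h t‖ ≤ ∫ t in a..1, ε * (t ^ n * w t) := by
        refine norm_integral_le_of_norm_le ha.2 ?_
          ((intervalIntegrable_pow_mul hw n ha h1).const_mul ε)
        filter_upwards [Measure.ae_ne volume 1] with t ht1 ht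
        rw [norm_mul, norm_pow, Real.norm_of_nonneg (ha.1.trans ht.1.le), mul_left_comm]
        exact mul_le_mul_of_nonneg_left (hbound t ⟨ht.1, ht.2.lt_of_ne ht1⟩)
          (pow_nonneg (ha.1.trans ht.1.le) n)
    _ = ε * ∫ t in a..1, t ^ n * w t := intervalIntegral.integral_const_mul _ _
    _ ≤ ε * moment w n := by
        gcongr
        exact integral_pow_mul_le_moment hw hw0 n ha.1 ha.2 le_rfl

omit hw in
lemma exists_norm_le_mul_of_isLittleO (hhw : h =o[𝓝[<] 1] w) {ε : ℝ} (hε : 0 < ε) :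
    ∃ a ∈ Ico (0:ℝ) 1, ∀ t ∈ Ioo a 1, ‖h t‖ ≤ ε * w t := by
  obtain ⟨l, hl1, hl⟩ := mem_nhdsLT_iff_exists_Ioo_subset.1 (isLittleO_iff.1 hhw hε)
  refine ⟨max l 0, ⟨le_max_right _ _, max_lt hl1 one_pos⟩, fun t ht => ?_⟩
  have ht0 : 0 ≤ t := (le_max_right _ _).trans ht.1.le
  have := hl ⟨(le_max_left _ _).trans_lt ht.1, ht.2⟩
  rwa [mem_ofPred_eq, Real.norm_of_nonneg (hw0 t ⟨ht0, ht.2.le⟩)] at this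

theorem moment_isLittleO_of_isLittleO (hh : IntegrableOn h (Icc 0 1))
    (htail : ∀ t ∈ Ico (0:ℝ) 1, 0 < ∫ x in t..1, w x) (hhw : h =o[𝓝[<] 1] w) :
    moment h =o[atTop] moment w := by
  refine isLittleO_iff.2 fun c hc => ?_
  obtain ⟨a, ha, hbound⟩ := exists_norm_le_mul_of_isLittleO hw0 hhw (half_pos hc)
  obtain ⟨b, hab, hb1⟩ := exists_between ha.2
  have hb : b ∈ Ico (0:ℝ) 1 := ⟨ha.1.trans hab.le, hb1⟩
  have hhead : (fun n => ∫ t in (0:ℝ)..a, t ^ n * h t) =o[atTop] moment w := by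
    -- `O(aⁿ)`, then `aⁿ = o(bⁿ)`, then `bⁿ = O(moment w n)`
    refine ((IsBigO.of_bound (∫ t in (0:ℝ)..1, |h t|) (Eventually.of_forall fun n => ?_))
      |>.trans_isLittleO (isLittleO_pow_pow_of_lt_left ha.1 hab)).trans_isBigO
      (IsBigO.of_bound (∫ t in b..1, w t)⁻¹ (Eventually.of_forall fun n => ?_))
    · rw [norm_pow, Real.norm_of_nonneg ha.1, mul_comm]
      exact norm_integral_pow_mul_le hh n (Ico_subset_Icc_self ha)
    · rw [norm_pow, Real.norm_of_nonneg hb.1, inv_mul_eq_div, le_div_iff₀ (htail b hb)]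
      exact (pow_mul_integral_le_moment hw hw0 n (Ico_subset_Icc_self hb)).trans
        (Real.le_norm_self _)
  filter_upwards [hhead.bound (half_pos hc)] with n hn
  have h0 : (0:ℝ) ∈ Icc (0:ℝ) 1 := ⟨le_rfl, zero_le_one⟩
  have h1 : (1:ℝ) ∈ Icc (0:ℝ) 1 := ⟨zero_le_one, le_rfl⟩
  have ha' := Ico_subset_Icc_self ha
  calc ‖moment h n‖
      = ‖(∫ t in (0:ℝ)..a, t ^ n * h t) + ∫ t in a..1, t ^ n * h t‖ := by
        rw [moment, integral_add_adjacent_intervals (intervalIntegrable_pow_mul hh n h0 ha')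
          (intervalIntegrable_pow_mul hh n ha' h1)]
    _ ≤ c / 2 * ‖moment w n‖ + c / 2 * ‖moment w n‖ :=
        (norm_add_le _ _).trans (add_le_add hn <|
          (norm_integral_pow_mul_le_mul_moment hw hw0 n ha' (half_pos hc).le hbound).trans
            (mul_le_mul_of_nonneg_left (Real.le_norm_self _) (half_pos hc).le))
    _ = c * ‖moment w n‖ := by ring

end

theorem moment_ratio_tendsto_one_general
    (v w : ℝ → ℝ)
    (hw_nonneg : ∀ t ∈ Icc (0:ℝ) 1, 0 ≤ w t)
    (hv_int : IntegrableOn v (Icc (0:ℝ) 1))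
    (hw_int : IntegrableOn w (Icc (0:ℝ) 1))
    (hw_tail : ∀ t ∈ Ico (0:ℝ) 1, 0 < ∫ x in t..1, w x)
    (hratio : Tendsto (fun t => if v t = 0 ∧ w t = 0 then 1 else v t / w t)
      (nhdsWithin 1 (Iio (1:ℝ))) (nhds 1)) :
    Tendsto (fun n : ℕ => (∫ t in (0:ℝ)..1, t ^ n * v t) / (∫ t in (0:ℝ)..1, t ^ n * w t))
      atTop (nhds 1) := by
  have hmoment : moment v ~[atTop] moment w := by
    have := moment_isLittleO_of_isLittleO hw_int hw_nonneg (Integrable.sub hv_int hw_int) hw_tail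
      (isEquivalent_of_tendsto_div_ite hratio)
    rwa [moment_sub hv_int hw_int] at this
  refine (isEquivalent_iff_tendsto_one (Eventually.of_forall fun n => ?_)).1 hmoment
  exact (moment_pos hw_int hw_nonneg n (b := 1 / 2) ⟨by norm_num, by norm_num⟩
    (hw_tail _ ⟨by norm_num, by norm_num⟩)).ne'

/-- If `v, w` are non-negative integrable weights on `[0,1]` with positive tails and
`v(t)/w(t) → 1` as `t → 1⁻`, then the ratio of their `n`-th moments tends to `1`. -/
theorem moment_ratio_tendsto_one
    (v w : ℝ → ℝ)
    (hv_nonneg : ∀ t ∈ Icc (0:ℝ) 1, 0 ≤ v t)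
    (hw_nonneg : ∀ t ∈ Icc (0:ℝ) 1, 0 ≤ w t)
    (hv_int : IntegrableOn v (Icc (0:ℝ) 1))
    (hw_int : IntegrableOn w (Icc (0:ℝ) 1))
    (hv_tail : ∀ t ∈ Ico (0:ℝ) 1, 0 < ∫ x in t..1, v x)
    (hw_tail : ∀ t ∈ Ico (0:ℝ) 1, 0 < ∫ x in t..1, w x)
    (hratio : Tendsto (fun t => if v t = 0 ∧ w t = 0 then 1 else v t / w t)
      (nhdsWithin 1 (Iio (1:ℝ))) (nhds 1)) :
    Tendsto (fun n : ℕ => (∫ t in (0:ℝ)..1, t ^ n * v t) / (∫ t in (0:ℝ)..1, t ^ n * w t))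
      atTop (nhds 1) :=
  moment_ratio_tendsto_one_general v w hw_nonneg hv_int hw_int hw_tail hratio
end

section
/- Let $\mu$ be a finite positive Borel measure on $[0,1]$, for $x > 0$ let $v_x(t) = \int_{[t,1]} \frac{(s-t)^{x-1}}{\Gamma(x)}\,d\mu(s)$, and assume $v_1(t) > 0$ for all $0 \le t < 1$. Then for each $x > 0$, $\lim_{n \to \infty} \frac{n^x \int_0^1 t^n v_x(t)\,dt}{\int_{[0,1]} t^n\,d\mu(t)} = 1$. -/
open MeasureTheory Set Filter
open scoped Nat Topology

/-!
Fubini on the triangle `0 < t ≤ s ≤ 1` followed by the substitution `t = s u` turns the numerator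
into `nˣ B(n + 1, x) / Γ(x) · ∫ s^(n + x) dμ`, and `nˣ B(n + 1, x) → Γ(x)` is Euler's limit formula
`Real.GammaSeq_tendsto_Gamma`. It remains that `∫ s^(n + x) dμ / ∫ sⁿ dμ → 1`: as `μ` charges
every `[b, 1]` with `b < 1`, the measures `sⁿ dμ` concentrate at `1`, where `sˣ` is close to `1`.
-/

section Moments

variable (μ : Measure ℝ) [IsFiniteMeasure μ]

lemma integrableOn_pow_Icc (n : ℕ) : IntegrableOn (fun s : ℝ => s ^ n) (Icc 0 1) μ :=
  (continuous_pow n).continuousOn.integrableOn_compact isCompact_Icc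

lemma integrableOn_rpow_Icc {p : ℝ} (hp : 0 ≤ p) :
    IntegrableOn (fun s : ℝ => s ^ p) (Icc 0 1) μ :=
  (continuousOn_id.rpow_const fun _ _ => Or.inr hp).integrableOn_compact isCompact_Icc

lemma pow_mul_measureReal_le_setIntegral_pow {b : ℝ} (hb : 0 ≤ b) (n : ℕ) :
    b ^ n * μ.real (Icc b 1) ≤ ∫ s in Icc 0 1, s ^ n ∂μ := by
  have hsub : Icc b 1 ⊆ Icc 0 1 := Icc_subset_Icc hb le_rfl
  calc b ^ n * μ.real (Icc b 1) ≤ ∫ s in Icc b 1, s ^ n ∂μ :=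
        setIntegral_ge_of_const_le_real measurableSet_Icc (measure_ne_top _ _)
          (fun s hs => pow_le_pow_left₀ hb hs.1 n) ((integrableOn_pow_Icc μ n).mono_set hsub)
    _ ≤ ∫ s in Icc 0 1, s ^ n ∂μ :=
        setIntegral_mono_set (integrableOn_pow_Icc μ n)
          ((ae_restrict_mem measurableSet_Icc).mono fun s hs => pow_nonneg hs.1 n)
          hsub.eventuallyLE

lemma setIntegral_Ico_pow_le {a : ℝ} (ha : a ≤ 1) (n : ℕ) :
    ∫ s in Ico 0 a, s ^ n ∂μ ≤ a ^ n * μ.real (Ico 0 a) := by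
  rw [mul_comm, ← smul_eq_mul, ← setIntegral_const]
  exact setIntegral_mono_on ((integrableOn_pow_Icc μ n).mono_set (Ico_subset_Icc_self.trans
    (Icc_subset_Icc le_rfl ha))) (integrableOn_const (measure_ne_top _ _)) measurableSet_Ico
    fun s hs => pow_le_pow_left₀ hs.1 hs.2.le n

lemma setIntegral_Icc_pow_eq_add {a : ℝ} (ha0 : 0 ≤ a) (ha1 : a ≤ 1) (n : ℕ) :
    ∫ s in Icc 0 1, s ^ n ∂μ = ∫ s in Ico 0 a, s ^ n ∂μ + ∫ s in Icc a 1, s ^ n ∂μ := by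
  have hint := integrableOn_pow_Icc μ n
  rw [← Ico_union_Icc_eq_Icc ha0 ha1] at hint ⊢
  exact setIntegral_union ((Iio_disjoint_Ici le_rfl).mono Ico_subset_Iio_self Icc_subset_Ici_self)
    measurableSet_Icc (hint.mono_set subset_union_left) (hint.mono_set subset_union_right)

lemma setIntegral_rpow_add_le {x : ℝ} (hx : 0 ≤ x) (n : ℕ) :
    ∫ s in Icc 0 1, s ^ ((n:ℝ) + x) ∂μ ≤ ∫ s in Icc 0 1, s ^ n ∂μ :=
  setIntegral_mono_on (integrableOn_rpow_Icc μ (by positivity)) (integrableOn_pow_Icc μ n)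
    measurableSet_Icc fun s hs => by
      rw [← Real.rpow_natCast s n]
      exact Real.rpow_le_rpow_of_exponent_ge' hs.1 hs.2 n.cast_nonneg (le_add_of_nonneg_right hx)

lemma rpow_mul_setIntegral_Icc_pow_le {a x : ℝ} (ha : 0 < a) (hx : 0 ≤ x) (n : ℕ) :
    a ^ x * ∫ s in Icc a 1, s ^ n ∂μ ≤ ∫ s in Icc 0 1, s ^ ((n:ℝ) + x) ∂μ := by
  have hsub : Icc a 1 ⊆ Icc 0 1 := Icc_subset_Icc ha.le le_rfl
  have hint := integrableOn_rpow_Icc μ (by positivity : 0 ≤ (n:ℝ) + x)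
  calc a ^ x * ∫ s in Icc a 1, s ^ n ∂μ = ∫ s in Icc a 1, a ^ x * s ^ n ∂μ :=
        (integral_const_mul _ _).symm
    _ ≤ ∫ s in Icc a 1, s ^ ((n:ℝ) + x) ∂μ :=
        setIntegral_mono_on (((integrableOn_pow_Icc μ n).mono_set hsub).const_mul _)
          (hint.mono_set hsub) measurableSet_Icc fun s hs => by
            rw [Real.rpow_add (ha.trans_le hs.1), Real.rpow_natCast, mul_comm]
            exact mul_le_mul_of_nonneg_left (Real.rpow_le_rpow ha.le hs.1 hx)
              (pow_nonneg (ha.le.trans hs.1) n)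
    _ ≤ ∫ s in Icc 0 1, s ^ ((n:ℝ) + x) ∂μ :=
        setIntegral_mono_set hint
          ((ae_restrict_mem measurableSet_Icc).mono fun s hs => Real.rpow_nonneg hs.1 _)
          hsub.eventuallyLE

variable {μ}

lemma setIntegral_pow_pos (hpos : ∀ t ∈ Ico (0:ℝ) 1, 0 < μ (Icc t 1)) (n : ℕ) :
    0 < ∫ s in Icc 0 1, s ^ n ∂μ := by
  have hhalf : 0 < μ.real (Icc (1 / 2) 1) :=
    ENNReal.toReal_pos (hpos _ ⟨by norm_num, by norm_num⟩).ne' (measure_ne_top _ _)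
  exact (mul_pos (by positivity) hhalf).trans_le
    (pow_mul_measureReal_le_setIntegral_pow μ (by norm_num) n)

lemma tendsto_setIntegral_Ico_pow_div (hpos : ∀ t ∈ Ico (0:ℝ) 1, 0 < μ (Icc t 1)) {a : ℝ}
    (ha0 : 0 ≤ a) (ha1 : a < 1) :
    Tendsto (fun n : ℕ => (∫ s in Ico 0 a, s ^ n ∂μ) / ∫ s in Icc 0 1, s ^ n ∂μ) atTop (𝓝 0) := by
  obtain ⟨b, hab, hb1⟩ := exists_between ha1
  have hb : 0 < b := ha0.trans_lt hab
  have hmass : 0 < μ.real (Icc b 1) :=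
    ENNReal.toReal_pos (hpos b ⟨hb.le, hb1⟩).ne' (measure_ne_top _ _)
  have hgeom : Tendsto (fun n : ℕ => (a / b) ^ n * (μ.real (Ico 0 a) / μ.real (Icc b 1)))
      atTop (𝓝 0) := by
    simpa using (tendsto_pow_atTop_nhds_zero_of_lt_one (div_nonneg ha0 hb.le)
      ((div_lt_one hb).2 hab)).mul_const _
  refine squeeze_zero (fun n => div_nonneg ?_ (setIntegral_pow_pos hpos n).le) (fun n => ?_) hgeom
  · exact setIntegral_nonneg measurableSet_Ico fun s hs => pow_nonneg hs.1 n
  calc (∫ s in Ico 0 a, s ^ n ∂μ) / ∫ s in Icc 0 1, s ^ n ∂μ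
      ≤ a ^ n * μ.real (Ico 0 a) / (b ^ n * μ.real (Icc b 1)) :=
        div_le_div₀ (by positivity) (setIntegral_Ico_pow_le μ ha1.le n) (by positivity)
          (pow_mul_measureReal_le_setIntegral_pow μ hb.le n)
    _ = (a / b) ^ n * (μ.real (Ico 0 a) / μ.real (Icc b 1)) := by
        rw [div_pow, div_mul_div_comm]

theorem tendsto_setIntegral_rpow_add_div_pow (hpos : ∀ t ∈ Ico (0:ℝ) 1, 0 < μ (Icc t 1))
    {x : ℝ} (hx : 0 ≤ x) :
    Tendsto (fun n : ℕ => (∫ s in Icc 0 1, s ^ ((n:ℝ) + x) ∂μ) / ∫ s in Icc 0 1, s ^ n ∂μ)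
      atTop (𝓝 1) := by
  refine tendsto_order.2 ⟨fun c hc => ?_, fun c hc => Eventually.of_forall fun n =>
    ((div_le_one (setIntegral_pow_pos hpos n)).2 (setIntegral_rpow_add_le μ hx n)).trans_lt hc⟩
  obtain ⟨a, ⟨ha0, ha1⟩, hca⟩ : ∃ a ∈ Ioo (0:ℝ) 1, c < a ^ x := by
    have hnear : ∀ᶠ a in 𝓝[<] (1:ℝ), c < a ^ x :=
      ((Real.continuousAt_rpow_const 1 x (Or.inl one_ne_zero)).tendsto.mono_left
        nhdsWithin_le_nhds).eventually (lt_mem_nhds (by simpa using hc))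
    have hbelow : ∀ᶠ a in 𝓝[<] (1:ℝ), a ∈ Ioo 0 1 := Ioo_mem_nhdsLT zero_lt_one
    exact (hbelow.and hnear).exists
  have hlim : Tendsto (fun n : ℕ => a ^ x * (1 - (∫ s in Ico 0 a, s ^ n ∂μ) /
      ∫ s in Icc 0 1, s ^ n ∂μ)) atTop (𝓝 (a ^ x)) := by
    simpa using ((tendsto_setIntegral_Ico_pow_div hpos ha0.le ha1).const_sub 1).const_mul (a ^ x)
  filter_upwards [hlim.eventually (lt_mem_nhds hca)] with n hn
  refine hn.trans_le ?_
  have hI := setIntegral_pow_pos hpos n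
  rw [le_div_iff₀ hI, one_sub_div hI.ne', mul_div_assoc', div_mul_cancel₀ _ hI.ne',
    setIntegral_Icc_pow_eq_add μ ha0.le ha1.le n, add_sub_cancel_left]
  exact rpow_mul_setIntegral_Icc_pow_le μ ha0 hx n

end Moments

section FractionalIntegral

variable {x : ℝ}

lemma intervalIntegrable_pow_mul_sub_rpow (hx : 0 < x) (n : ℕ) (s : ℝ) :
    IntervalIntegrable (fun t => t ^ n * (s - t) ^ (x - 1)) volume 0 s := by
  have h : IntervalIntegrable (fun t => (s - t) ^ (x - 1)) volume 0 s := by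
    simpa using (intervalIntegral.intervalIntegrable_rpow' (a := s) (b := 0)
      (by linarith : (-1:ℝ) < x - 1)).comp_sub_left s
  simpa using h.continuousOn_mul (g := fun t : ℝ => t ^ n) (by fun_prop)

/-- The constant is the Beta value `B(n + 1, x)`. -/
lemma integral_pow_mul_sub_rpow (hx : 0 < x) (n : ℕ) {s : ℝ} (hs : 0 ≤ s) :
    ∫ t in (0:ℝ)..s, t ^ n * (s - t) ^ (x - 1) =
      s ^ ((n:ℝ) + x) * (n ! / ∏ j ∈ Finset.range (n + 1), (x + j)) := by
  rcases hs.eq_or_lt with rfl | hs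
  · simp [Real.zero_rpow (by positivity : (n:ℝ) + x ≠ 0)]
  have hB := Complex.betaIntegral_scaled ((n:ℂ) + 1) x hs
  rw [Complex.betaIntegral_symm, Complex.betaIntegral_eval_nat_add_one_right (by simpa) n] at hB
  apply Complex.ofReal_injective
  rw [← intervalIntegral.integral_ofReal]
  push_cast
  convert hB using 1
  · refine intervalIntegral.integral_congr fun t ht => ?_
    rw [uIcc_of_le hs.le] at ht
    simp only [add_sub_cancel_right, Complex.cpow_natCast]
    push_cast [Complex.ofReal_cpow (sub_nonneg.2 ht.2)]
    rfl
  · rw [Complex.ofReal_cpow hs.le]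
    push_cast
    ring_nf

noncomputable def triangleKernel (x : ℝ) (n : ℕ) : ℝ × ℝ → ℝ :=
  {p | 0 < p.1 ∧ p.1 ≤ p.2 ∧ p.2 ≤ 1}.indicator fun p => p.1 ^ n * (p.2 - p.1) ^ (x - 1)

lemma triangleKernel_nonneg (n : ℕ) (p : ℝ × ℝ) : 0 ≤ triangleKernel x n p := by
  refine indicator_nonneg (fun p hp => ?_) p
  exact mul_nonneg (pow_nonneg hp.1.le n) (Real.rpow_nonneg (sub_nonneg.2 hp.2.1) _)

lemma measurable_triangleKernel (n : ℕ) : Measurable (triangleKernel x n) := by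
  refine Measurable.indicator (by fun_prop) ?_
  exact (measurableSet_lt measurable_const measurable_fst).inter
    ((measurableSet_le measurable_fst measurable_snd).inter
      (measurableSet_le measurable_snd measurable_const))

lemma integral_triangleKernel_left (μ : Measure ℝ) (n : ℕ) (t : ℝ) :
    ∫ s, triangleKernel x n (t, s) ∂μ =
      (Ioc 0 1).indicator (fun t => t ^ n * ∫ s in Icc t 1, (s - t) ^ (x - 1) ∂μ) t := by
  by_cases ht : t ∈ Ioc 0 1
  · have h : (fun s => triangleKernel x n (t, s)) =
        (Icc t 1).indicator fun s => t ^ n * (s - t) ^ (x - 1) := by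
      ext s
      simp [triangleKernel, indicator, ht.1]
    rw [h, integral_indicator measurableSet_Icc, integral_const_mul, indicator_of_mem ht]
  · have h : ∀ s, triangleKernel x n (t, s) = 0 := fun s =>
      indicator_of_notMem (fun hp => ht ⟨hp.1, hp.2.1.trans hp.2.2⟩) _
    simp [h, indicator_of_notMem ht]

lemma triangleKernel_right_eq {n : ℕ} {s : ℝ} (hs : s ∈ Icc (0:ℝ) 1) :
    (fun t => triangleKernel x n (t, s)) =
      (Ioc 0 s).indicator fun t => t ^ n * (s - t) ^ (x - 1) := by
  ext t
  simp [triangleKernel, indicator, hs.2]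

lemma triangleKernel_right_eq_zero {n : ℕ} {s : ℝ} (hs : s ∉ Icc (0:ℝ) 1) (t : ℝ) :
    triangleKernel x n (t, s) = 0 :=
  indicator_of_notMem (fun hp => hs ⟨hp.1.le.trans hp.2.1, hp.2.2⟩) _

lemma integrable_triangleKernel_right (hx : 0 < x) (n : ℕ) (s : ℝ) :
    Integrable (fun t => triangleKernel x n (t, s)) := by
  by_cases hs : s ∈ Icc (0:ℝ) 1
  · rw [triangleKernel_right_eq hs, integrable_indicator_iff measurableSet_Ioc]
    exact (intervalIntegrable_iff_integrableOn_Ioc_of_le hs.1).1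
      (intervalIntegrable_pow_mul_sub_rpow hx n s)
  · simp [triangleKernel_right_eq_zero hs]

lemma integral_triangleKernel_right (hx : 0 < x) (n : ℕ) (s : ℝ) :
    ∫ t, triangleKernel x n (t, s) = (Icc 0 1).indicator
      (fun s => s ^ ((n:ℝ) + x) * (n ! / ∏ j ∈ Finset.range (n + 1), (x + j))) s := by
  by_cases hs : s ∈ Icc (0:ℝ) 1
  · rw [triangleKernel_right_eq hs, integral_indicator measurableSet_Ioc,
      ← intervalIntegral.integral_of_le hs.1, integral_pow_mul_sub_rpow hx n hs.1,
      indicator_of_mem hs]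
  · simp [triangleKernel_right_eq_zero hs, indicator_of_notMem hs]

lemma integrable_triangleKernel (μ : Measure ℝ) [IsFiniteMeasure μ] (hx : 0 < x) (n : ℕ) :
    Integrable (triangleKernel x n) (volume.prod μ) := by
  refine (integrable_prod_iff' (measurable_triangleKernel n).aestronglyMeasurable).2
    ⟨ae_of_all _ (integrable_triangleKernel_right hx n), ?_⟩
  simp only [Real.norm_of_nonneg (triangleKernel_nonneg n _), integral_triangleKernel_right hx n]
  refine (integrable_indicator_iff measurableSet_Icc).2 ?_
  exact (integrableOn_rpow_Icc μ (by positivity)).mul_const _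

lemma integral_pow_mul_integral_sub_rpow (μ : Measure ℝ) [IsFiniteMeasure μ] (hx : 0 < x)
    (n : ℕ) :
    ∫ t in (0:ℝ)..1, t ^ n * ∫ s in Icc t 1, (s - t) ^ (x - 1) ∂μ =
      n ! / (∏ j ∈ Finset.range (n + 1), (x + j)) * ∫ s in Icc 0 1, s ^ ((n:ℝ) + x) ∂μ := by
  calc ∫ t in (0:ℝ)..1, t ^ n * ∫ s in Icc t 1, (s - t) ^ (x - 1) ∂μ
      = ∫ t, ∫ s, triangleKernel x n (t, s) ∂μ := by
        simp only [integral_triangleKernel_left, integral_indicator measurableSet_Ioc,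
          intervalIntegral.integral_of_le zero_le_one]
    _ = ∫ s, (∫ t, triangleKernel x n (t, s)) ∂μ :=
        integral_integral_swap (f := fun t s => triangleKernel x n (t, s))
          (integrable_triangleKernel μ hx n)
    _ = _ := by
        simp only [integral_triangleKernel_right hx, integral_indicator measurableSet_Icc,
          integral_mul_const, mul_comm]

end FractionalIntegral

theorem fractional_integral_moments_asymptotics_general
    (μ : Measure ℝ) [IsFiniteMeasure μ]
    (hpos : ∀ t ∈ Ico (0:ℝ) 1, 0 < μ (Icc t 1))
    (x : ℝ) (hx : 0 < x) :
    Tendsto (fun n : ℕ =>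
        ((n : ℝ) ^ x * ∫ t in (0:ℝ)..1,
          t ^ n * ∫ s in Icc t 1, (s - t) ^ (x - 1) / Real.Gamma x ∂μ) /
        (∫ t in Icc (0:ℝ) 1, t ^ n ∂μ))
      atTop (nhds 1) := by
  have hfactor : ∀ n : ℕ,
      ((n : ℝ) ^ x * ∫ t in (0:ℝ)..1,
          t ^ n * ∫ s in Icc t 1, (s - t) ^ (x - 1) / Real.Gamma x ∂μ) /
        (∫ t in Icc (0:ℝ) 1, t ^ n ∂μ) =
      Real.GammaSeq x n / Real.Gamma x *
        ((∫ s in Icc 0 1, s ^ ((n:ℝ) + x) ∂μ) / ∫ s in Icc 0 1, s ^ n ∂μ) := by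
    intro n
    simp only [integral_div, ← mul_div_assoc, intervalIntegral.integral_div,
      integral_pow_mul_integral_sub_rpow μ hx, Real.GammaSeq]
    ring
  simp only [hfactor]
  simpa [div_self (Real.Gamma_pos_of_pos hx).ne'] using
    ((Real.GammaSeq_tendsto_Gamma x).div_const (Real.Gamma x)).mul
      (tendsto_setIntegral_rpow_add_div_pow hpos hx.le)

/-- If `μ` is a finite positive Borel measure on `[0,1]` with `μ([t,1]) > 0` for all `t < 1`
(i.e. `v₁(t) > 0`), then for each `x > 0`,
`n^x ∫_0^1 t^n v_x(t) dt / ∫_{[0,1]} t^n dμ(t) → 1`. -/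
theorem fractional_integral_moments_asymptotics
    (μ : Measure ℝ) [IsFiniteMeasure μ] (hμ : μ (Icc (0:ℝ) 1)ᶜ = 0)
    (hpos : ∀ t ∈ Ico (0:ℝ) 1, 0 < μ (Icc t 1))
    (x : ℝ) (hx : 0 < x) :
    Tendsto (fun n : ℕ =>
        ((n : ℝ) ^ x * ∫ t in (0:ℝ)..1,
          t ^ n * ∫ s in Icc t 1, (s - t) ^ (x - 1) / Real.Gamma x ∂μ) /
        (∫ t in Icc (0:ℝ) 1, t ^ n ∂μ))
      atTop (nhds 1) :=
  fractional_integral_moments_asymptotics_general μ hpos x hx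
end

section
/- Let $v \in L^1[0,1]$ be a weight and let $\widehat v(t) = \int_t^1 v(s)\,ds$. Then $\widehat v$ is doubling near 1 (i.e., there exists $c > 0$ with $\widehat v(t) \le c\, \widehat v(\frac{1+t}{2})$ for all $t \in [0,1)$) if and only if there exists $M > 1$ such that $\int_t^1 \widehat v(s)\,ds \le (1-t)\widehat v(t) \le M \int_t^1 \widehat v(s)\,ds$ for all $t \in [0,1)$. -/
/-!
Write `v̂` for the tail of `v` and `W` for the tail of `v̂`, so that `W' = -v̂`. If `v̂` is
doubling, then `W(t) ≥ ∫_t^{(1+t)/2} v̂ ≥ (1-t)/2 · v̂((1+t)/2) ≥ (1-t) v̂(t) / (2c)`.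
Conversely, the right comparison inequality says `(1 - s) · (-W') ≤ M W`, i.e. that
`W(s) (1-s)^{-M}` is nondecreasing; hence `W(t) ≤ 2^M W((1+t)/2)`, and the two comparison
inequalities at `t` and at `(1+t)/2` turn this into `v̂(t) ≤ M 2^{M-1} v̂((1+t)/2)`.
-/

open MeasureTheory Set intervalIntegral

section Tail

variable {f : ℝ → ℝ} {a b : ℝ}

theorem continuousOn_integral_tail (hab : a ≤ b) (hf : IntegrableOn f (Icc a b)) :
    ContinuousOn (fun t => ∫ x in t..b, f x) (Icc a b) := by
  rw [← uIcc_of_le hab] at hf ⊢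
  exact continuousOn_primitive_interval_left hf

theorem antitoneOn_integral_tail (hf : IntegrableOn f (Icc a b))
    (hf₀ : ∀ x ∈ Icc a b, 0 ≤ f x) : AntitoneOn (fun t => ∫ x in t..b, f x) (Icc a b) := by
  intro s hs t ht hst
  have hint {u w : ℝ} (hu : u ∈ Icc a b) (hw : w ∈ Icc a b) : IntervalIntegrable f volume u w :=
    (hf.mono_set (uIcc_subset_Icc hu hw)).intervalIntegrable
  dsimp only
  rw [← integral_add_adjacent_intervals (hint hs ht) (hint ht (right_mem_Icc.2 (hs.1.trans hs.2)))]
  have hhead := integral_nonneg (μ := volume) hst fun x hx => hf₀ x ⟨hs.1.trans hx.1, hx.2.trans ht.2⟩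
  linarith

theorem hasDerivAt_integral_tail (hf : ContinuousOn f (Icc a b)) {s : ℝ} (hs : s ∈ Ioo a b) :
    HasDerivAt (fun t => ∫ x in t..b, f x) (-f s) s :=
  integral_hasDerivAt_left
    ((hf.mono (Icc_subset_Icc hs.1.le le_rfl)).intervalIntegrable_of_Icc hs.2.le)
    ((hf.mono Ioo_subset_Icc_self).stronglyMeasurableAtFilter isOpen_Ioo s hs)
    (hf.continuousAt (Icc_mem_nhds hs.1 hs.2))

end Tail

namespace AntitoneOn

variable {g : ℝ → ℝ} {a b : ℝ}

theorem integral_le_sub_mul_left (hab : a ≤ b) (hg : AntitoneOn g (Icc a b)) :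
    ∫ x in a..b, g x ≤ (b - a) * g a := by
  have hint : IntervalIntegrable g volume a b := (uIcc_of_le hab ▸ hg).intervalIntegrable
  simpa using integral_mono_on hab hint intervalIntegrable_const
    fun x hx => hg (left_mem_Icc.2 hab) hx hx.1

theorem sub_mul_right_le_integral (hab : a ≤ b) (hg : AntitoneOn g (Icc a b)) :
    (b - a) * g b ≤ ∫ x in a..b, g x := by
  have hint : IntervalIntegrable g volume a b := (uIcc_of_le hab ▸ hg).intervalIntegrable
  simpa using integral_mono_on hab intervalIntegrable_const hint
    fun x hx => hg hx (right_mem_Icc.2 hab) hx.2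

end AntitoneOn

/-- The hypothesis says exactly that `s ↦ W s * (e - s) ^ (-M)` is nondecreasing. -/
theorem le_div_rpow_mul_of_sub_mul_neg_deriv_le {W W' : ℝ → ℝ} {M a b e : ℝ} (hab : a ≤ b)
    (hbe : b < e) (hW : ContinuousOn W (Icc a b)) (hW' : ∀ s ∈ Ioo a b, HasDerivAt W (W' s) s)
    (hcmp : ∀ s ∈ Ioo a b, (e - s) * -W' s ≤ M * W s) :
    W a ≤ ((e - a) / (e - b)) ^ M * W b := by
  have hpos : ∀ s ∈ Icc a b, 0 < e - s := fun s hs => by linarith [hs.2]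
  have hpow : ∀ s ∈ Icc a b, (e - s) ^ (-M) = (e - s) ^ (-M - 1) * (e - s) := fun s hs => by
    rw [← Real.rpow_add_one (hpos s hs).ne', sub_add_cancel]
  have hmono : MonotoneOn (fun s => W s * (e - s) ^ (-M)) (Icc a b) := by
    refine monotoneOn_of_hasDerivWithinAt_nonneg
      (f' := fun s => (e - s) ^ (-M - 1) * ((e - s) * W' s + M * W s)) (convex_Icc a b)
      (hW.mul fun s hs => ((continuousAt_const.sub continuousAt_id).rpow_const
        (Or.inl (hpos s hs).ne')).continuousWithinAt) (fun s hs => ?_) (fun s hs => ?_)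
    all_goals rw [interior_Icc] at hs
    · have hs' := Ioo_subset_Icc_self hs
      have := (hW' s hs).mul (((hasDerivAt_id' s).const_sub e).rpow_const
        (p := -M) (Or.inl (hpos s hs').ne'))
      refine (this.congr_deriv ?_).hasDerivWithinAt
      rw [hpow s hs']
      ring
    · exact mul_nonneg (Real.rpow_nonneg (hpos s (Ioo_subset_Icc_self hs)).le _)
        (by linarith [hcmp s hs])
  have hab' : W a * (e - a) ^ (-M) ≤ W b * (e - b) ^ (-M) :=
    hmono (left_mem_Icc.2 hab) (right_mem_Icc.2 hab) hab
  have ha := hpos a (left_mem_Icc.2 hab)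
  have hb := hpos b (right_mem_Icc.2 hab)
  rw [Real.rpow_neg ha.le, Real.rpow_neg hb.le] at hab'
  rw [Real.div_rpow ha.le hb.le]
  calc W a = W a * ((e - a) ^ M)⁻¹ * (e - a) ^ M := by
        field_simp [(Real.rpow_pos_of_pos ha M).ne']
    _ ≤ W b * ((e - b) ^ M)⁻¹ * (e - a) ^ M := by gcongr
    _ = (e - a) ^ M / (e - b) ^ M * W b := by ring

theorem sub_mul_le_two_mul_integral_of_le_mul_midpoint {F : ℝ → ℝ} {c t : ℝ} (hc : 0 ≤ c)
    (ht : t ≤ 1) (hF : AntitoneOn F (Icc t 1)) (hF₀ : ∀ s ∈ Icc t 1, 0 ≤ F s)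
    (hdbl : F t ≤ c * F ((1 + t) / 2)) :
    (1 - t) * F t ≤ 2 * c * ∫ s in t..1, F s := by
  set m := (1 + t) / 2 with hm
  have htm : t ≤ m := by rw [hm]; linarith
  have hm1 : m ≤ 1 := by rw [hm]; linarith
  have hint : IntervalIntegrable F volume t 1 := (uIcc_of_le ht ▸ hF).intervalIntegrable
  have hhead : (m - t) * F m ≤ ∫ s in t..m, F s :=
    (hF.mono (Icc_subset_Icc le_rfl hm1)).sub_mul_right_le_integral htm
  have hrest : 0 ≤ ∫ s in m..1, F s :=
    integral_nonneg hm1 fun s hs => hF₀ s ⟨htm.trans hs.1, hs.2⟩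
  have hmid := mem_uIcc_of_le htm hm1
  rw [← integral_add_adjacent_intervals (hint.mono_set (uIcc_subset_uIcc_left hmid))
    (hint.mono_set (uIcc_subset_uIcc_right hmid))]
  calc (1 - t) * F t ≤ (1 - t) * (c * F m) := mul_le_mul_of_nonneg_left hdbl (by linarith)
    _ = 2 * c * ((m - t) * F m) := by ring
    _ ≤ 2 * c * ((∫ s in t..m, F s) + ∫ s in m..1, F s) := by gcongr; linarith

theorem le_mul_midpoint_of_tail_comparison {F W : ℝ → ℝ} {M t : ℝ} (ht : t < 1) (hM : 0 ≤ M)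
    (hW : ContinuousOn W (Icc t ((1 + t) / 2)))
    (hW' : ∀ s ∈ Ioo t ((1 + t) / 2), HasDerivAt W (-F s) s)
    (hcmp : ∀ s ∈ Icc t ((1 + t) / 2), (1 - s) * F s ≤ M * W s)
    (hmid : W ((1 + t) / 2) ≤ (1 - (1 + t) / 2) * F ((1 + t) / 2)) :
    F t ≤ M * 2 ^ (M - 1) * F ((1 + t) / 2) := by
  set m := (1 + t) / 2 with hm
  have htm : t ≤ m := by rw [hm]; linarith
  have hm1 : m < 1 := by rw [hm]; linarith
  have hgrowth : W t ≤ 2 ^ M * W m := by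
    have h2 : (1 - t) / (1 - m) = 2 := by
      rw [div_eq_iff (by linarith), hm]; ring
    simpa [h2] using le_div_rpow_mul_of_sub_mul_neg_deriv_le htm hm1 hW hW'
      fun s hs => by simpa using hcmp s (Ioo_subset_Icc_self hs)
  have key : (1 - t) * F t ≤ (1 - t) * (M * 2 ^ (M - 1) * F m) := calc
    (1 - t) * F t ≤ M * W t := hcmp t (left_mem_Icc.2 htm)
    _ ≤ M * (2 ^ M * W m) := by gcongr
    _ ≤ M * (2 ^ M * ((1 - m) * F m)) := by gcongr
    _ = (1 - t) * (M * 2 ^ (M - 1) * F m) := by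
      rw [Real.rpow_sub_one two_ne_zero, hm]; ring
  exact le_of_mul_le_mul_left key (by linarith)

theorem doubling_iff_tail_comparison_general
    (v : ℝ → ℝ) (hv_nonneg : ∀ t ∈ Icc (0:ℝ) 1, 0 ≤ v t)
    (hv_int : IntegrableOn v (Icc (0:ℝ) 1)) :
    (∃ c > 0, ∀ t ∈ Ico (0:ℝ) 1,
        (∫ x in t..1, v x) ≤ c * ∫ x in ((1+t)/2)..1, v x)
    ↔ (∃ M > 1, ∀ t ∈ Ico (0:ℝ) 1,
        (∫ s in t..1, ∫ x in s..1, v x) ≤ (1 - t) * ∫ x in t..1, v x ∧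
        (1 - t) * (∫ x in t..1, v x) ≤ M * ∫ s in t..1, ∫ x in s..1, v x) := by
  set F : ℝ → ℝ := fun t => ∫ x in t..1, v x
  have hF_cont : ContinuousOn F (Icc 0 1) := continuousOn_integral_tail zero_le_one hv_int
  have hF_anti : AntitoneOn F (Icc 0 1) := antitoneOn_integral_tail hv_int hv_nonneg
  have hF_nonneg (t : ℝ) (ht : t ∈ Icc (0:ℝ) 1) : 0 ≤ F t :=
    integral_nonneg ht.2 fun x hx => hv_nonneg x ⟨ht.1.trans hx.1, hx.2⟩
  constructor
  · rintro ⟨c, hc, hdbl⟩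
    refine ⟨2 * c + 1, by linarith, fun t ht => ?_⟩
    have hsub : Icc t 1 ⊆ Icc 0 1 := Icc_subset_Icc_left ht.1
    have hW_nonneg : 0 ≤ ∫ s in t..1, F s :=
      integral_nonneg ht.2.le fun s hs => hF_nonneg s (hsub hs)
    have hright := sub_mul_le_two_mul_integral_of_le_mul_midpoint hc.le ht.2.le
      (hF_anti.mono hsub) (fun s hs => hF_nonneg s (hsub hs)) (hdbl t ht)
    exact ⟨(hF_anti.mono hsub).integral_le_sub_mul_left ht.2.le, by linarith⟩
  · rintro ⟨M, hM, hcmp⟩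
    have hW_cont := continuousOn_integral_tail zero_le_one hF_cont.integrableOn_Icc
    refine ⟨M * 2 ^ (M - 1), by positivity, fun t ht => ?_⟩
    have hsub : Icc t ((1 + t) / 2) ⊆ Ico 0 1 := fun s hs =>
      ⟨ht.1.trans hs.1, by linarith [hs.2, ht.2]⟩
    have hsub' : Ioo t ((1 + t) / 2) ⊆ Ioo 0 1 := fun s hs =>
      ⟨ht.1.trans_lt hs.1, (hsub (Ioo_subset_Icc_self hs)).2⟩
    exact le_mul_midpoint_of_tail_comparison ht.2 (by linarith)
      (hW_cont.mono (hsub.trans Ico_subset_Icc_self))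
      (fun s hs => hasDerivAt_integral_tail hF_cont (hsub' hs))
      (fun s hs => (hcmp s (hsub hs)).2) (hcmp _ (hsub (right_mem_Icc.2 (by linarith [ht.2])))).1

/-- A weight `v` on `[0,1]` has doubling tail `v̂` near `1` if and only if there is `M > 1`
with `∫_t^1 v̂ ≤ (1-t) v̂(t) ≤ M ∫_t^1 v̂` for all `t ∈ [0,1)`. -/
theorem doubling_iff_tail_comparison
    (v : ℝ → ℝ) (hv_nonneg : ∀ t ∈ Icc (0:ℝ) 1, 0 ≤ v t)
    (hv_int : IntegrableOn v (Icc (0:ℝ) 1))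
    (hv_tail : ∀ t ∈ Ico (0:ℝ) 1, 0 < ∫ x in t..1, v x) :
    (∃ c > 0, ∀ t ∈ Ico (0:ℝ) 1,
        (∫ x in t..1, v x) ≤ c * ∫ x in ((1+t)/2)..1, v x)
    ↔ (∃ M > 1, ∀ t ∈ Ico (0:ℝ) 1,
        (∫ s in t..1, ∫ x in s..1, v x) ≤ (1 - t) * ∫ x in t..1, v x ∧
        (1 - t) * (∫ x in t..1, v x) ≤ M * ∫ s in t..1, ∫ x in s..1, v x) :=
  doubling_iff_tail_comparison_general v hv_nonneg hv_int
end

section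
/- If a weight $v \in L^1[0,1]$ is weakly normal of order $\alpha$, then $\alpha > -1$. -/
open MeasureTheory Set

/-- The fractional integral `v_x` of order `x ≥ 0` of a weight `v` on `[0,1]`,
with `v_0 = v`. -/
noncomputable def fracInt (v : ℝ → ℝ) (x : ℝ) : ℝ → ℝ :=
  if x = 0 then v else fun t => ∫ s in t..1, (s - t) ^ (x - 1) / Real.Gamma x * v s

/-- A weight `v` on `[0,1]` is weakly normal of order `α` if for some `x ≥ 0` the function
`(1-t)^(α+x) / v_x(t)` is almost decreasing on some `[t₀,1)`. -/
def WeaklyNormal (v : ℝ → ℝ) (α : ℝ) : Prop :=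
  ∃ x ≥ (0:ℝ), ∃ t₀ ∈ Ico (0:ℝ) 1, ∃ C > (0:ℝ),
    ∀ s ∈ Ico t₀ 1, ∀ t ∈ Ico t₀ 1, s ≤ t →
      (1 - t) ^ (α + x) / fracInt v x t ≤ C * ((1 - s) ^ (α + x) / fracInt v x s)

/-!
Suppose `α ≤ -1`. Comparing with a point `s₀` where `v_x(s₀) > 0`, the almost monotonicity of
`(1 - t) ^ (α + x) / v_x(t)` gives `v_x(u) ≥ c (1 - u) ^ (α + x) ≥ c (1 - u) ^ (x - 1)` for almost
every `u` near `1`. For `x = 0` this lower bound is not integrable at `1`, contradicting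
`v ∈ L¹`. For `x > 0`, Tonelli gives
`∫_t^1 Γ(x) v_x = ∫_t^1 (s - t) ^ x / x · v(s) ds ≤ (1 - t) ^ x / x · ∫_t^1 v`, while the lower
bound gives `∫_t^1 Γ(x) v_x ≥ Γ(x) c (1 - t) ^ x / x`. Hence `∫_t^1 v ≥ Γ(x) c` for all `t` near
`1`, contradicting `∫_t^1 v → 0`.
-/

open ENNReal Filter Topology

/-- For `x = 0` both sides are `∞`: in `ℝ≥0∞`, `a / 0 = ∞` for `a ≠ 0`. -/
lemma lintegral_Ioo_sub_rpow {a b x : ℝ} (hx : 0 ≤ x) (hab : a < b) :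
    ∫⁻ u in Ioo a b, ENNReal.ofReal ((b - u) ^ (x - 1))
      = ENNReal.ofReal ((b - a) ^ x) / ENNReal.ofReal x := by
  have hnn : 0 ≤ᵐ[volume.restrict (Ioo a b)] fun u => (b - u) ^ (x - 1) :=
    ae_restrict_of_forall_mem measurableSet_Ioo fun u hu =>
      Real.rpow_nonneg (sub_nonneg.2 hu.2.le) _
  have hint : IntegrableOn (fun u => (b - u) ^ (x - 1)) (Ioo a b) ↔ 0 < x := by
    have h : IntervalIntegrable (fun u => (b - u) ^ (x - 1)) volume a b ↔
        IntervalIntegrable (fun w => w ^ (x - 1)) volume (b - a) 0 := by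
      simpa using IntervalIntegrable.comp_sub_left_iff (f := fun w : ℝ => w ^ (x - 1))
        (a := b - a) (b := 0) b (by simp)
    rw [IntervalIntegrable.symm_iff (f := fun w : ℝ => w ^ (x - 1)),
      intervalIntegrable_iff_integrableOn_Ioo_of_le hab.le,
      intervalIntegrable_iff_integrableOn_Ioo_of_le (by linarith),
      intervalIntegral.integrableOn_Ioo_rpow_iff (by linarith)] at h
    rw [h, neg_lt_sub_iff_lt_add, lt_add_iff_pos_right]
  rcases hx.eq_or_lt with rfl | hx
  · rw [ENNReal.ofReal_zero, ENNReal.div_zero (by simp)]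
    by_contra h
    have hmeas : Measurable fun u : ℝ => (b - u) ^ (0 - 1 : ℝ) := by fun_prop
    exact lt_irrefl _ (hint.1 ⟨hmeas.aestronglyMeasurable,
      (hasFiniteIntegral_iff_ofReal hnn).2 (lt_top_iff_ne_top.2 h)⟩)
  · rw [← ofReal_integral_eq_lintegral_ofReal (hint.2 hx) hnn, ← ENNReal.ofReal_div_of_pos hx,
      ← integral_Ioc_eq_integral_Ioo, ← intervalIntegral.integral_of_le hab.le,
      intervalIntegral.integral_comp_sub_left (fun w => w ^ (x - 1)), sub_self,
      integral_rpow (Or.inl (by linarith)), Real.zero_rpow (by linarith)]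
    simp

lemma le_lintegral_of_const_mul_rpow_le {g : ℝ → ℝ} {c x t : ℝ} (hx : 0 ≤ x) (ht : t < 1)
    (hg : ∀ᵐ u ∂volume.restrict (Ioo t 1), c * (1 - u) ^ (x - 1) ≤ g u) :
    ENNReal.ofReal c * (ENNReal.ofReal ((1 - t) ^ x) / ENNReal.ofReal x)
      ≤ ∫⁻ u in Ioo t 1, ENNReal.ofReal (g u) := by
  rw [← lintegral_Ioo_sub_rpow hx ht, ← lintegral_const_mul' _ _ ofReal_ne_top]
  refine lintegral_mono_ae ?_
  filter_upwards [hg, ae_restrict_mem measurableSet_Ioo] with u hgu hu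
  rw [← ENNReal.ofReal_mul' (Real.rpow_nonneg (by linarith [hu.2]) _)]
  exact ENNReal.ofReal_le_ofReal hgu

lemma exists_const_mul_one_sub_rpow_le {f : ℝ → ℝ} {β γ C t₀ : ℝ} (hβγ : β ≤ γ) (hC : 0 < C)
    (ht₀ : t₀ ∈ Ico 0 1) (hpos : ∀ᵐ u ∂volume.restrict (Ioo t₀ 1), 0 < f u)
    (hdec : ∀ s ∈ Ico t₀ 1, ∀ t ∈ Ico t₀ 1, s ≤ t →
      (1 - t) ^ β / f t ≤ C * ((1 - s) ^ β / f s)) :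
    ∃ c > 0, ∃ s₀ ∈ Ioo t₀ 1, ∀ᵐ u ∂volume.restrict (Ioo s₀ 1), c * (1 - u) ^ γ ≤ f u := by
  have : (ae (volume.restrict (Ioo t₀ 1))).NeBot := by
    rw [ae_neBot, Ne, Measure.restrict_eq_zero, Real.volume_Ioo]
    simpa using ht₀.2
  obtain ⟨s₀, hfs₀, hs₀⟩ := (hpos.and (ae_restrict_mem measurableSet_Ioo)).exists
  have hP : 0 < (1 - s₀) ^ β := Real.rpow_pos_of_pos (by linarith [hs₀.2]) _
  refine ⟨f s₀ / (C * (1 - s₀) ^ β), by positivity, s₀, hs₀, ?_⟩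
  filter_upwards [ae_restrict_of_ae_restrict_of_subset (Ioo_subset_Ioo_left hs₀.1.le) hpos,
    ae_restrict_mem measurableSet_Ioo] with u hfu hu
  have h := hdec s₀ (Ioo_subset_Ico_self hs₀) u ⟨(hs₀.1.trans hu.1).le, hu.2⟩ hu.1.le
  rw [div_le_iff₀ hfu, mul_div_assoc', div_mul_eq_mul_div, le_div_iff₀ hfs₀] at h
  have hγ : (1 - u) ^ γ ≤ (1 - u) ^ β := Real.rpow_le_rpow_of_exponent_ge (by linarith [hu.2])
    (by linarith [ht₀.1, hs₀.1, hu.1]) hβγ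
  calc f s₀ / (C * (1 - s₀) ^ β) * (1 - u) ^ γ
      ≤ f s₀ / (C * (1 - s₀) ^ β) * (1 - u) ^ β := by gcongr
    _ ≤ f u := by
      rw [div_mul_eq_mul_div, div_le_iff₀ (by positivity)]
      linarith

lemma pos_of_rpow_div_le {v : ℝ → ℝ} {α C t₀ : ℝ} (hC : 0 < C)
    (hv_tail : ∀ t ∈ Ico t₀ 1, 0 < ∫ x in t..1, v x)
    (hdec : ∀ s ∈ Ico t₀ 1, ∀ t ∈ Ico t₀ 1, s ≤ t →
      (1 - t) ^ α / v t ≤ C * ((1 - s) ^ α / v s)) :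
    ∀ s ∈ Ico t₀ 1, 0 < v s := by
  intro s hs
  by_contra! hvs
  have hnonpos : ∀ t ∈ Ioo s 1, v t ≤ 0 := by
    intro t ht
    by_contra! hvt
    have h := hdec s hs t ⟨hs.1.trans ht.1.le, ht.2⟩ ht.1.le
    have hs' : (1 - s) ^ α / v s ≤ 0 :=
      div_nonpos_of_nonneg_of_nonpos (Real.rpow_nonneg (by linarith [hs.2]) _) hvs
    have ht' : 0 < (1 - t) ^ α / v t := div_pos (Real.rpow_pos_of_pos (by linarith [ht.2]) _) hvt
    nlinarith
  have h := hv_tail s hs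
  rw [intervalIntegral.integral_of_le hs.2.le, integral_Ioc_eq_integral_Ioo] at h
  exact h.not_ge (setIntegral_nonpos measurableSet_Ioo hnonpos)

section FracLIntegral

variable {v : ℝ → ℝ} {x t u : ℝ}

/-- `Γ(x) v_x(u)` as an `ℝ≥0∞`-valued integral: unlike `fracInt`, it is not set to `0` where the
integrand fails to be integrable. -/
noncomputable def fracLIntegral (v : ℝ → ℝ) (x u : ℝ) : ℝ≥0∞ :=
  ∫⁻ s in Ioo u 1, ENNReal.ofReal ((s - u) ^ (x - 1)) * ENNReal.ofReal (v s)

noncomputable def fracKernel (v : ℝ → ℝ) (x : ℝ) : ℝ × ℝ → ℝ≥0∞ :=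
  {p : ℝ × ℝ | p.1 < p.2}.indicator
    fun p => ENNReal.ofReal ((p.2 - p.1) ^ (x - 1)) * ENNReal.ofReal (v p.2)

lemma aemeasurable_fracKernel {μ ν : Measure ℝ} [SFinite ν]
    (hv : AEMeasurable v ν) : AEMeasurable (fracKernel v x) (μ.prod ν) := by
  have hk : Measurable fun p : ℝ × ℝ => ENNReal.ofReal ((p.2 - p.1) ^ (x - 1)) := by fun_prop
  exact (hk.aemeasurable.mul hv.ennreal_ofReal.comp_snd).indicator
    (measurableSet_lt measurable_fst measurable_snd)

lemma fracLIntegral_eq_setLIntegral_fracKernel (htu : t ≤ u) :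
    fracLIntegral v x u = ∫⁻ s in Ioo t 1, fracKernel v x (u, s) := by
  have hIoi : Ioi u ∩ Ioo t 1 = Ioo u 1 := by rw [Ioi_inter_Ioo, max_eq_left htu]
  have hker : (fun s => fracKernel v x (u, s)) = (Ioi u).indicator
      fun s => ENNReal.ofReal ((s - u) ^ (x - 1)) * ENNReal.ofReal (v s) := by
    ext s
    simp only [fracKernel, indicator_apply, mem_ofPred_eq, mem_Ioi]
  rw [hker, lintegral_indicator measurableSet_Ioi, Measure.restrict_restrict measurableSet_Ioi,
    hIoi, fracLIntegral]

lemma setLIntegral_fracKernel_right {s : ℝ} (hx : 0 ≤ x) (hs : s ∈ Ioo t 1) :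
    ∫⁻ u in Ioo t 1, fracKernel v x (u, s)
      = ENNReal.ofReal ((s - t) ^ x) / ENNReal.ofReal x * ENNReal.ofReal (v s) := by
  have hIio : Iio s ∩ Ioo t 1 = Ioo t s := by
    rw [inter_comm, Ioo_inter_Iio, min_eq_right hs.2.le]
  have hker : (fun u => fracKernel v x (u, s)) = (Iio s).indicator
      fun u => ENNReal.ofReal ((s - u) ^ (x - 1)) * ENNReal.ofReal (v s) := by
    ext u
    simp only [fracKernel, indicator_apply, mem_ofPred_eq, mem_Iio]
  rw [hker, lintegral_indicator measurableSet_Iio, Measure.restrict_restrict measurableSet_Iio,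
    hIio, lintegral_mul_const' _ _ ofReal_ne_top, lintegral_Ioo_sub_rpow hx hs.1]

lemma aemeasurable_fracLIntegral (hv : AEMeasurable v (volume.restrict (Ioo t 1))) :
    AEMeasurable (fracLIntegral v x) (volume.restrict (Ioo t 1)) :=
  (aemeasurable_fracKernel hv).lintegral_prod_right'.congr <|
    ae_restrict_of_forall_mem measurableSet_Ioo fun _ hu =>
      (fracLIntegral_eq_setLIntegral_fracKernel hu.1.le).symm

lemma setLIntegral_fracLIntegral_le (hx : 0 ≤ x)
    (hv : AEMeasurable v (volume.restrict (Ioo t 1))) :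
    ∫⁻ u in Ioo t 1, fracLIntegral v x u
      ≤ ENNReal.ofReal ((1 - t) ^ x) / ENNReal.ofReal x * ∫⁻ s in Ioo t 1, ENNReal.ofReal (v s) :=
  calc ∫⁻ u in Ioo t 1, fracLIntegral v x u
      = ∫⁻ u in Ioo t 1, ∫⁻ s in Ioo t 1, fracKernel v x (u, s) :=
        setLIntegral_congr_fun measurableSet_Ioo fun _ hu =>
          fracLIntegral_eq_setLIntegral_fracKernel hu.1.le
    _ = ∫⁻ s in Ioo t 1, ∫⁻ u in Ioo t 1, fracKernel v x (u, s) :=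
        lintegral_lintegral_swap (aemeasurable_fracKernel hv)
    _ = ∫⁻ s in Ioo t 1, ENNReal.ofReal ((s - t) ^ x) / ENNReal.ofReal x * ENNReal.ofReal (v s) :=
        setLIntegral_congr_fun measurableSet_Ioo fun _ hs => setLIntegral_fracKernel_right hx hs
    _ ≤ ∫⁻ s in Ioo t 1,
          ENNReal.ofReal ((1 - t) ^ x) / ENNReal.ofReal x * ENNReal.ofReal (v s) := by
        refine setLIntegral_mono' measurableSet_Ioo fun s hs => ?_
        gcongr
        · exact sub_nonneg.2 hs.1.le
        · exact hs.2.le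
    _ = _ := lintegral_const_mul'' _ hv.ennreal_ofReal

lemma gamma_mul_fracInt_eq_toReal (hx : 0 < x) (hu : u ≤ 1) (hv_nonneg : ∀ s ∈ Ioo u 1, 0 ≤ v s)
    (hv : AEStronglyMeasurable v (volume.restrict (Ioo u 1))) :
    Real.Gamma x * fracInt v x u = (fracLIntegral v x u).toReal := by
  have hΓ : Real.Gamma x ≠ 0 := (Real.Gamma_pos_of_pos hx).ne'
  have hk : Measurable fun s : ℝ => (s - u) ^ (x - 1) := by fun_prop
  have hnn : 0 ≤ᵐ[volume.restrict (Ioo u 1)] fun s => (s - u) ^ (x - 1) * v s :=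
    ae_restrict_of_forall_mem measurableSet_Ioo fun s hs =>
      mul_nonneg (Real.rpow_nonneg (sub_nonneg.2 hs.1.le) _) (hv_nonneg s hs)
  have hcancel : ∀ s, Real.Gamma x * ((s - u) ^ (x - 1) / Real.Gamma x * v s)
      = (s - u) ^ (x - 1) * v s := fun s => by field_simp
  rw [fracInt, if_neg hx.ne', intervalIntegral.integral_of_le hu, integral_Ioc_eq_integral_Ioo,
    ← integral_const_mul]
  simp only [hcancel]
  rw [integral_eq_lintegral_of_nonneg_ae hnn (hk.aestronglyMeasurable.mul hv), fracLIntegral]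
  exact congrArg _ <| setLIntegral_congr_fun measurableSet_Ioo fun s hs =>
    ENNReal.ofReal_mul (Real.rpow_nonneg (sub_nonneg.2 hs.1.le) _)

lemma fracLIntegral_ne_zero (hu : u ≤ 1)
    (hv : AEMeasurable v (volume.restrict (Ioo u 1))) (hV : 0 < ∫ s in u..1, v s) :
    fracLIntegral v x u ≠ 0 := by
  intro h0
  have hk : Measurable fun s : ℝ => ENNReal.ofReal ((s - u) ^ (x - 1)) := by fun_prop
  have hae := (lintegral_eq_zero_iff' (hk.aemeasurable.mul hv.ennreal_ofReal)).1 h0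
  have hv0 : ∀ᵐ s ∂volume.restrict (Ioo u 1), v s ≤ 0 := by
    filter_upwards [hae, ae_restrict_mem measurableSet_Ioo] with s hs hmem
    have hks : ENNReal.ofReal ((s - u) ^ (x - 1)) ≠ 0 := by
      simpa using Real.rpow_pos_of_pos (sub_pos.2 hmem.1) (x - 1)
    exact ENNReal.ofReal_eq_zero.1 ((mul_eq_zero.1 hs).resolve_left hks)
  rw [intervalIntegral.integral_of_le hu, integral_Ioc_eq_integral_Ioo] at hV
  exact hV.not_ge (integral_nonpos_of_ae hv0)

lemma fracInt_pos_ae (hx : 0 < x) (hv_nonneg : ∀ s ∈ Ioo t 1, 0 ≤ v s)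
    (hv : AEStronglyMeasurable v (volume.restrict (Ioo t 1)))
    (hv_fin : ∫⁻ s in Ioo t 1, ENNReal.ofReal (v s) ≠ ∞)
    (hv_tail : ∀ u ∈ Ioo t 1, 0 < ∫ s in u..1, v s) :
    ∀ᵐ u ∂volume.restrict (Ioo t 1), 0 < fracInt v x u := by
  have hbound := setLIntegral_fracLIntegral_le hx.le hv.aemeasurable
  have hfin : ∀ᵐ u ∂volume.restrict (Ioo t 1), fracLIntegral v x u < ∞ :=
    ae_lt_top' (aemeasurable_fracLIntegral hv.aemeasurable) <| ne_top_of_le_ne_top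
      (ENNReal.mul_ne_top (ENNReal.div_ne_top ofReal_ne_top (by simpa using hx)) hv_fin) hbound
  filter_upwards [hfin, ae_restrict_mem measurableSet_Ioo] with u hu hmem
  have hsub : Ioo u 1 ⊆ Ioo t 1 := Ioo_subset_Ioo_left hmem.1.le
  have hv' := hv.mono_set hsub
  have hpos : 0 < (fracLIntegral v x u).toReal := ENNReal.toReal_pos
    (fracLIntegral_ne_zero hmem.2.le hv'.aemeasurable (hv_tail u hmem)) hu.ne
  rw [← gamma_mul_fracInt_eq_toReal hx hmem.2.le (fun s hs => hv_nonneg s (hsub hs)) hv'] at hpos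
  exact pos_of_mul_pos_right hpos (Real.Gamma_pos_of_pos hx).le

lemma ofReal_le_setLIntegral_of_le_fracInt {c : ℝ} (hx : 0 < x) (ht : t < 1)
    (hv_nonneg : ∀ s ∈ Ioo t 1, 0 ≤ v s)
    (hv : AEStronglyMeasurable v (volume.restrict (Ioo t 1)))
    (hc : ∀ᵐ u ∂volume.restrict (Ioo t 1), c * (1 - u) ^ (x - 1) ≤ fracInt v x u) :
    ENNReal.ofReal (Real.Gamma x * c) ≤ ∫⁻ s in Ioo t 1, ENNReal.ofReal (v s) := by
  have hΓc : ∀ᵐ u ∂volume.restrict (Ioo t 1),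
      Real.Gamma x * c * (1 - u) ^ (x - 1) ≤ Real.Gamma x * fracInt v x u := by
    filter_upwards [hc] with u hu
    rw [mul_assoc]
    exact mul_le_mul_of_nonneg_left hu (Real.Gamma_pos_of_pos hx).le
  set P := ENNReal.ofReal ((1 - t) ^ x) / ENNReal.ofReal x
  have hP0 : P ≠ 0 := by
    simpa [P, ENNReal.div_eq_zero_iff] using Real.rpow_pos_of_pos (sub_pos.2 ht) x
  have hPtop : P ≠ ∞ := ENNReal.div_ne_top ofReal_ne_top (by simpa using hx)
  rw [← ENNReal.mul_le_mul_iff_right hP0 hPtop, mul_comm]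
  calc ENNReal.ofReal (Real.Gamma x * c) * P
      ≤ ∫⁻ u in Ioo t 1, ENNReal.ofReal (Real.Gamma x * fracInt v x u) :=
        le_lintegral_of_const_mul_rpow_le hx.le ht hΓc
    _ ≤ ∫⁻ u in Ioo t 1, fracLIntegral v x u := by
        refine setLIntegral_mono' measurableSet_Ioo fun u hu => ?_
        have hsub : Ioo u 1 ⊆ Ioo t 1 := Ioo_subset_Ioo_left hu.1.le
        rw [gamma_mul_fracInt_eq_toReal hx hu.2.le (fun s hs => hv_nonneg s (hsub hs))
          (hv.mono_set hsub)]
        exact ofReal_toReal_le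
    _ ≤ P * ∫⁻ s in Ioo t 1, ENNReal.ofReal (v s) :=
        setLIntegral_fracLIntegral_le hx.le hv.aemeasurable

end FracLIntegral

lemma tendsto_setLIntegral_Ioo_nhdsLT {f : ℝ → ℝ≥0∞} {a b : ℝ} (hab : a < b)
    (hf : ∫⁻ s in Ioo a b, f s ≠ ∞) :
    Tendsto (fun t => ∫⁻ s in Ioo t b, f s) (𝓝[<] b) (𝓝 0) := by
  have hvol : Tendsto (fun t => volume (Ioo t b)) (𝓝[<] b) (𝓝 0) := by
    simp only [Real.volume_Ioo]
    rw [← ENNReal.ofReal_zero, ← sub_self b]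
    exact (ENNReal.continuous_ofReal.tendsto _).comp
      ((continuous_const.sub continuous_id).tendsto b |>.mono_left nhdsWithin_le_nhds)
  have h := tendsto_setLIntegral_zero (f := (Ioo a b).indicator f)
    (by rwa [lintegral_indicator measurableSet_Ioo]) hvol
  refine h.congr' ?_
  filter_upwards [Ioo_mem_nhdsLT hab] with t ht
  exact setLIntegral_congr_fun measurableSet_Ioo fun s hs =>
    indicator_of_mem (show s ∈ Ioo a b from ⟨ht.1.trans hs.1, hs.2⟩) f

/-- If a weight is weakly normal of order `α`, then `α > -1`. -/
theorem weaklyNormal_order_gt_neg_one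
    (v : ℝ → ℝ) (hv_nonneg : ∀ t ∈ Icc (0:ℝ) 1, 0 ≤ v t)
    (hv_int : IntegrableOn v (Icc (0:ℝ) 1))
    (hv_tail : ∀ t ∈ Ico (0:ℝ) 1, 0 < ∫ x in t..1, v x)
    (α : ℝ) (h : WeaklyNormal v α) : -1 < α := by
  obtain ⟨x, hx, t₀, ht₀, C, hC, hdec⟩ := h
  by_contra! hα
  have hsub : Ioo t₀ 1 ⊆ Icc 0 1 := fun u hu => ⟨ht₀.1.trans hu.1.le, hu.2.le⟩
  have hv_int' := hv_int.mono_set hsub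
  have hv_fin : ∫⁻ s in Ioo t₀ 1, ENNReal.ofReal (v s) ≠ ∞ := hv_int'.lintegral_lt_top.ne
  have hpos : ∀ᵐ u ∂volume.restrict (Ioo t₀ 1), 0 < fracInt v x u := by
    rcases hx.eq_or_lt with rfl | hx
    · rw [fracInt, if_pos rfl] at hdec ⊢
      exact ae_restrict_of_forall_mem measurableSet_Ioo fun u hu =>
        pos_of_rpow_div_le hC (fun t ht => hv_tail t ⟨ht₀.1.trans ht.1, ht.2⟩) hdec u
          (Ioo_subset_Ico_self hu)
    · exact fracInt_pos_ae hx (fun s hs => hv_nonneg s (hsub hs)) hv_int'.aestronglyMeasurable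
        hv_fin fun u hu => hv_tail u ⟨ht₀.1.trans hu.1.le, hu.2⟩
  obtain ⟨c, hc, s₀, hs₀, hcv⟩ :=
    exists_const_mul_one_sub_rpow_le (γ := x - 1) (by linarith) hC ht₀ hpos hdec
  rcases hx.eq_or_lt with rfl | hx
  · have h := le_lintegral_of_const_mul_rpow_le le_rfl hs₀.2 hcv
    rw [fracInt, if_pos rfl, ENNReal.ofReal_zero, ENNReal.div_zero (by simp),
      ENNReal.mul_top (by simpa using hc)] at h
    exact hv_fin (top_le_iff.1 (h.trans (lintegral_mono_set (Ioo_subset_Ioo_left hs₀.1.le))))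
  · have hmass : ∀ᶠ t in 𝓝[<] 1,
        ENNReal.ofReal (Real.Gamma x * c) ≤ ∫⁻ s in Ioo t 1, ENNReal.ofReal (v s) := by
      filter_upwards [Ioo_mem_nhdsLT hs₀.2] with t ht
      have hsub' : Ioo t 1 ⊆ Ioo t₀ 1 := Ioo_subset_Ioo_left (hs₀.1.trans ht.1).le
      exact ofReal_le_setLIntegral_of_le_fracInt hx ht.2 (fun s hs => hv_nonneg s (hsub (hsub' hs)))
        (hv_int'.aestronglyMeasurable.mono_set hsub')
        (ae_restrict_of_ae_restrict_of_subset (Ioo_subset_Ioo_left ht.1.le) hcv)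
    have h0 := ge_of_tendsto (tendsto_setLIntegral_Ioo_nhdsLT ht₀.2 hv_fin) hmass
    exact (ENNReal.ofReal_pos.2 (mul_pos (Real.Gamma_pos_of_pos hx) hc)).not_ge h0
end

section
/- Let $\mu$ be a probability measure on $[0,1]$ with $\mu((0,1]) > 0$. Then there exist real numbers $c_n \ge 0$, $n \ge 1$, such that for all complex $z$ with $|z| < 1$, $\int_{[0,1]} \frac{1}{1 - tz}\,d\mu(t) = \frac{1}{1 - \sum_{n=1}^\infty c_n z^n}$. -/
/-!
Expanding `(1 - t z)⁻¹` as a geometric series shows that the left side is `∑ Fₙ zⁿ` with the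
moments `Fₙ = ∫ tⁿ dμ`. These are positive and log-convex (`F_{n+1}² ≤ Fₙ F_{n+2}` by
Cauchy–Schwarz), with `F₀ = 1`. By Kaluza's lemma the reciprocal of such a power series is
`1 - ∑_{n ≥ 1} cₙ zⁿ` with `cₙ ≥ 0`; moreover `cₙ ≤ Fₙ ≤ 1`, so all series converge on the
unit disc.
-/

open Finset MeasureTheory Set

/-- The coefficients `c` with `(1 - ∑ cₙ zⁿ) * ∑ Fₙ zⁿ = 1` when `F 0 = 1`, obtained by comparing
coefficients. -/
noncomputable def kaluzaCoeff (F : ℕ → ℝ) : ℕ → ℝ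
  | 0 => 0
  | n + 1 => F (n + 1) - ∑ k : Fin (n + 1), kaluzaCoeff F k * F (n + 1 - k)

namespace kaluzaCoeff

variable {F : ℕ → ℝ}

@[simp] lemma zero : kaluzaCoeff F 0 = 0 := by rw [kaluzaCoeff]

lemma succ (n : ℕ) :
    kaluzaCoeff F (n + 1) = F (n + 1) - ∑ k ∈ range (n + 1), kaluzaCoeff F k * F (n + 1 - k) := by
  rw [kaluzaCoeff, Fin.sum_univ_eq_sum_range (fun k => kaluzaCoeff F k * F (n + 1 - k))]

lemma sum_antidiagonal_mul (hF0 : F 0 = 1) (n : ℕ) :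
    ∑ p ∈ antidiagonal (n + 1), kaluzaCoeff F p.1 * F p.2 = F (n + 1) := by
  rw [Nat.sum_antidiagonal_eq_sum_range_succ (fun i j => kaluzaCoeff F i * F j), sum_range_succ,
    succ, Nat.sub_self, hF0]
  ring

lemma le_self (hc : ∀ n, 0 ≤ kaluzaCoeff F n) (hF : ∀ n, 0 ≤ F n) (n : ℕ) :
    kaluzaCoeff F n ≤ F n := by
  cases n with
  | zero => simpa using hF 0
  | succ n =>
    rw [succ, sub_le_self_iff]
    exact sum_nonneg fun k _ => mul_nonneg (hc k) (hF _)

end kaluzaCoeff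

lemma monotone_succ_div_of_sq_le_mul {F : ℕ → ℝ} (hF : ∀ n, 0 < F n)
    (hlc : ∀ n, F (n + 1) ^ 2 ≤ F n * F (n + 2)) : Monotone fun n => F (n + 1) / F n := by
  refine monotone_nat_of_le_succ fun n => ?_
  rw [div_le_div_iff₀ (hF n) (hF (n + 1))]
  nlinarith [hlc n]

/-- **Kaluza's lemma.** -/
theorem kaluzaCoeff_nonneg {F : ℕ → ℝ} (hF0 : F 0 = 1) (hF : ∀ n, 0 < F n)
    (hlc : ∀ n, F (n + 1) ^ 2 ≤ F n * F (n + 2)) (n : ℕ) : 0 ≤ kaluzaCoeff F n := by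
  induction n using Nat.strong_induction_on with
  | _ n ih =>
  match n with
  | 0 => simp
  | 1 => simpa [kaluzaCoeff.succ, hF0] using (hF 1).le
  | m + 2 =>
    set r := F (m + 2) / F (m + 1)
    have hshift (k : ℕ) (hk : k < m + 2) : F (m + 2 - k) ≤ r * F (m + 1 - k) := by
      have hratio : F (m + 1 - k + 1) / F (m + 1 - k) ≤ r :=
        monotone_succ_div_of_sq_le_mul hF hlc (by omega : m + 1 - k ≤ m + 1)
      rw [div_le_iff₀ (hF _), show m + 1 - k + 1 = m + 2 - k by omega] at hratio
      exact hratio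
    have hsum : ∑ k ∈ range (m + 2), kaluzaCoeff F k * F (m + 2 - k) ≤ F (m + 2) :=
      calc ∑ k ∈ range (m + 2), kaluzaCoeff F k * F (m + 2 - k)
          ≤ ∑ k ∈ range (m + 2), kaluzaCoeff F k * (r * F (m + 1 - k)) :=
            sum_le_sum fun k hk =>
              mul_le_mul_of_nonneg_left (hshift k (mem_range.1 hk)) (ih k (by simpa using hk))
        _ = r * ∑ p ∈ antidiagonal (m + 1), kaluzaCoeff F p.1 * F p.2 := by
            rw [Nat.sum_antidiagonal_eq_sum_range_succ (fun i j => kaluzaCoeff F i * F j),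
              mul_sum]
            exact sum_congr rfl fun k _ => by ring
        _ = F (m + 2) := by
            rw [kaluzaCoeff.sum_antidiagonal_mul hF0, div_mul_cancel₀ _ (hF (m + 1)).ne']
    rw [kaluzaCoeff.succ]
    linarith

theorem one_sub_tsum_mul_tsum_eq_one {R : Type*} [NormedRing R] [CompleteSpace R] {u v : ℕ → R}
    (hu : Summable fun n => ‖u n‖) (hv : Summable fun n => ‖v n‖) (hu0 : u 0 = 1) (hv0 : v 0 = 0)
    (hconv : ∀ n, ∑ p ∈ antidiagonal (n + 1), v p.1 * u p.2 = u (n + 1)) :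
    (1 - ∑' n, v n) * ∑' n, u n = 1 := by
  have hprod : (∑' n, v n) * ∑' n, u n = ∑' n, u (n + 1) := by
    rw [tsum_mul_tsum_eq_tsum_sum_antidiagonal_of_summable_norm hv hu,
      Summable.tsum_eq_zero_add (summable_norm_sum_mul_antidiagonal_of_summable_norm hv hu).of_norm]
    simp [hv0, hconv]
  rw [sub_mul, one_mul, hprod, hu.of_norm.tsum_eq_zero_add, hu0]
  abel

lemma summable_norm_ofReal_mul_pow {a : ℕ → ℝ} {C : ℝ} (ha : ∀ n, |a n| ≤ C) {z : ℂ}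
    (hz : ‖z‖ < 1) : Summable fun n => ‖(a n : ℂ) * z ^ n‖ := by
  refine .of_nonneg_of_le (fun n => norm_nonneg _) (fun n => ?_)
    ((summable_geometric_of_lt_one (norm_nonneg z) hz).mul_left C)
  rw [norm_mul, norm_pow, Complex.norm_real, Real.norm_eq_abs]
  exact mul_le_mul_of_nonneg_right (ha n) (by positivity)

theorem tsum_mul_pow_eq_inv_one_sub_kaluzaCoeff {F : ℕ → ℝ} {C : ℝ} (hF0 : F 0 = 1)
    (hF : ∀ n, |F n| ≤ C) (hc : ∀ n, |kaluzaCoeff F n| ≤ C) {z : ℂ} (hz : ‖z‖ < 1) :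
    Summable (fun n => (kaluzaCoeff F (n + 1) : ℂ) * z ^ (n + 1)) ∧
      ∑' n, (F n : ℂ) * z ^ n = (1 - ∑' n, (kaluzaCoeff F (n + 1) : ℂ) * z ^ (n + 1))⁻¹ := by
  have hu := summable_norm_ofReal_mul_pow hF hz
  have hv := summable_norm_ofReal_mul_pow hc hz
  have hconv (n : ℕ) : ∑ p ∈ antidiagonal (n + 1),
      (kaluzaCoeff F p.1 : ℂ) * z ^ p.1 * ((F p.2 : ℂ) * z ^ p.2) = F (n + 1) * z ^ (n + 1) := by
    rw [← kaluzaCoeff.sum_antidiagonal_mul hF0, Complex.ofReal_sum, sum_mul]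
    refine sum_congr rfl fun p hp => ?_
    rw [← mem_antidiagonal.1 hp, pow_add]
    push_cast
    ring
  refine ⟨(summable_nat_add_iff 1).2 hv.of_norm, eq_inv_of_mul_eq_one_right ?_⟩
  have h := one_sub_tsum_mul_tsum_eq_one hu hv (by simp [hF0]) (by simp) hconv
  rwa [hv.of_norm.tsum_eq_zero_add, kaluzaCoeff.zero, Complex.ofReal_zero, zero_mul,
    zero_add] at h

noncomputable def hausdorffMoment (μ : Measure ℝ) (n : ℕ) : ℝ := ∫ t in Icc (0 : ℝ) 1, t ^ n ∂μ

namespace hausdorffMoment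

variable {μ : Measure ℝ} [IsFiniteMeasureOnCompacts μ]

lemma integrableOn_pow (n : ℕ) : IntegrableOn (fun t : ℝ => t ^ n) (Icc 0 1) μ :=
  (continuous_pow n).continuousOn.integrableOn_compact isCompact_Icc

lemma antitone : Antitone (hausdorffMoment μ) := fun _ _ hmn =>
  setIntegral_mono_on (integrableOn_pow _) (integrableOn_pow _) measurableSet_Icc
    fun _ ht => pow_le_pow_of_le_one ht.1 ht.2 hmn

lemma pos (hμ : 0 < μ (Ioc 0 1)) (n : ℕ) : 0 < hausdorffMoment μ n := by
  have hsupp : Ioc (0 : ℝ) 1 ⊆ Function.support fun t : ℝ => t ^ n :=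
    fun t ht => pow_ne_zero n ht.1.ne'
  have hIoc : 0 < ∫ t in Ioc (0 : ℝ) 1, t ^ n ∂μ := by
    rwa [setIntegral_pos_iff_support_of_nonneg_ae
      ((ae_restrict_iff' measurableSet_Ioc).2 (ae_of_all _ fun t ht => pow_nonneg ht.1.le n))
      ((integrableOn_pow n).mono_set Ioc_subset_Icc_self), inter_eq_right.2 hsupp]
  refine hIoc.trans_le (setIntegral_mono_set (integrableOn_pow n) ?_
    Ioc_subset_Icc_self.eventuallyLE)
  exact (ae_restrict_iff' measurableSet_Icc).2 (ae_of_all _ fun t ht => pow_nonneg ht.1 n)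

/-- The moments are log-convex: `∫ tⁿ (t - x)² dμ ≥ 0` for every `x`, so the discriminant of this
quadratic in `x` is nonpositive. -/
lemma sq_le_mul (n : ℕ) :
    hausdorffMoment μ (n + 1) ^ 2 ≤ hausdorffMoment μ n * hausdorffMoment μ (n + 2) := by
  have hquad (x : ℝ) : 0 ≤ hausdorffMoment μ n * (x * x) + -2 * hausdorffMoment μ (n + 1) * x
      + hausdorffMoment μ (n + 2) := by
    have hexpand : ∫ t in Icc (0 : ℝ) 1, t ^ n * (t - x) ^ 2 ∂μ = hausdorffMoment μ n * (x * x)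
        + -2 * hausdorffMoment μ (n + 1) * x + hausdorffMoment μ (n + 2) := by
      have hi (k : ℕ) : Integrable (fun t : ℝ => t ^ k) (μ.restrict (Icc 0 1)) :=
        integrableOn_pow k
      rw [integral_congr_ae (g := fun t => x * x * t ^ n + -2 * x * t ^ (n + 1) + t ^ (n + 2))
          (ae_of_all _ fun t => by ring),
        integral_add, integral_add, integral_const_mul, integral_const_mul]
      · simp only [hausdorffMoment]
        ring
      all_goals fun_prop
    rw [← hexpand]
    exact setIntegral_nonneg measurableSet_Icc fun t ht => by have := ht.1; positivity
  have := discrim_le_zero hquad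
  rw [discrim] at this
  linarith

end hausdorffMoment

theorem setIntegral_inv_one_sub_mul_eq_tsum (μ : Measure ℝ) [IsFiniteMeasureOnCompacts μ] {z : ℂ}
    (hz : ‖z‖ < 1) :
    ∫ t in Icc (0 : ℝ) 1, (1 - (t : ℂ) * z)⁻¹ ∂μ = ∑' n, (hausdorffMoment μ n : ℂ) * z ^ n := by
  have hle {t : ℝ} (ht : t ∈ Icc (0 : ℝ) 1) : ‖(t : ℂ) * z‖ ≤ ‖z‖ := by
    rw [norm_mul, Complex.norm_real, Real.norm_of_nonneg ht.1]
    exact mul_le_of_le_one_left (norm_nonneg z) ht.2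
  have hnorm {t : ℝ} (ht : t ∈ Icc (0 : ℝ) 1) (n : ℕ) : ‖((t : ℂ) * z) ^ n‖ ≤ ‖z‖ ^ n :=
    (norm_pow _ n).trans_le (pow_le_pow_left₀ (norm_nonneg _) (hle ht) n)
  have hint (n : ℕ) : IntegrableOn (fun t : ℝ => ((t : ℂ) * z) ^ n) (Icc 0 1) μ :=
    ((Complex.continuous_ofReal.mul continuous_const).pow n).continuousOn.integrableOn_compact
      isCompact_Icc
  have hsum : Summable fun n => ∫ t in Icc (0 : ℝ) 1, ‖((t : ℂ) * z) ^ n‖ ∂μ := by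
    refine .of_nonneg_of_le (fun n => integral_nonneg fun _ => norm_nonneg _) (fun n => ?_)
      ((summable_geometric_of_lt_one (norm_nonneg z) hz).mul_right (μ.real (Icc 0 1)))
    refine (le_abs_self _).trans ?_
    rw [← Real.norm_eq_abs]
    exact norm_setIntegral_le_of_norm_le_const isCompact_Icc.measure_lt_top
      fun t ht => (norm_norm _).trans_le (hnorm ht n)
  rw [← setIntegral_congr_fun measurableSet_Icc fun t ht =>
      tsum_geometric_of_norm_lt_one ((hle ht).trans_lt hz),
    ← integral_tsum_of_summable_integral_norm hint hsum]
  refine tsum_congr fun n => ?_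
  simp_rw [mul_pow, integral_mul_const, hausdorffMoment, ← integral_complex_ofReal,
    Complex.ofReal_pow]

/-- For a probability measure `μ` on `[0,1]` with `μ((0,1]) > 0`, there are coefficients
`cₙ ≥ 0` such that `∫ (1 - t z)⁻¹ dμ(t) = (1 - ∑_{n≥1} cₙ zⁿ)⁻¹` for `|z| < 1`. -/
theorem cauchy_transform_is_pick_kernel
    (μ : Measure ℝ) [IsProbabilityMeasure μ] (hμ : μ (Icc (0:ℝ) 1)ᶜ = 0)
    (hpos : 0 < μ (Ioc (0:ℝ) 1)) :
    ∃ c : ℕ → ℝ, (∀ n, 0 ≤ c n) ∧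
      ∀ z : ℂ, ‖z‖ < 1 →
        Summable (fun n : ℕ => (c (n+1) : ℂ) * z ^ (n+1)) ∧
        (∫ t in Icc (0:ℝ) 1, (1 - (t:ℂ) * z)⁻¹ ∂μ)
          = (1 - ∑' n : ℕ, (c (n+1) : ℂ) * z ^ (n+1))⁻¹ := by
  set F := hausdorffMoment μ
  have hF0 : F 0 = 1 := by
    simp [F, hausdorffMoment, measureReal_def, (prob_compl_eq_zero_iff measurableSet_Icc).1 hμ]
  have hFpos : ∀ n, 0 < F n := hausdorffMoment.pos hpos
  have hF1 (n : ℕ) : |F n| ≤ 1 := by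
    rw [abs_of_pos (hFpos n), ← hF0]
    exact hausdorffMoment.antitone (Nat.zero_le n)
  have hc : ∀ n, 0 ≤ kaluzaCoeff F n := kaluzaCoeff_nonneg hF0 hFpos hausdorffMoment.sq_le_mul
  have hc1 (n : ℕ) : |kaluzaCoeff F n| ≤ 1 := by
    rw [abs_of_nonneg (hc n)]
    exact (kaluzaCoeff.le_self hc (fun n => (hFpos n).le) n).trans (le_of_abs_le (hF1 n))
  refine ⟨kaluzaCoeff F, hc, fun z hz => ?_⟩
  rw [setIntegral_inv_one_sub_mul_eq_tsum μ hz]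
  exact tsum_mul_pow_eq_inv_one_sub_kaluzaCoeff hF0 hF1 hc1 hz
end

section
/- Kaluza's lemma: Let $(a_n)_{n \ge 0}$ be a sequence with $a_0 = 1$, $a_n > 0$ for all $n$, and such that the ratios $a_{n+1}/a_n$ are nondecreasing, with the power series $f(z) = \sum_{n \ge 0} a_n z^n$ having positive radius of convergence. Then writing $1/f(z) = 1 - \sum_{n \ge 1} b_n z^n$, all coefficients $b_n$ are nonnegative. -/
open Finset

/-!
Comparing the convolution identities at `n` and `n + 1` gives
`b (n+1) = a (n+1) - ∑_{k=1}^n b k a (n+1-k)`. By induction the `b k` with `k ≤ n` are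
nonnegative, and log-convexity gives `a (n+1-k) ≤ (a (n+1) / a n) · a (n-k)`, so the sum is at most
`(a (n+1) / a n) · a n = a (n+1)`.
-/

section LogConvex

variable {𝕜 : Type*} [Field 𝕜] [LinearOrder 𝕜] [IsStrictOrderedRing 𝕜] {a : ℕ → 𝕜}

theorem le_ratio_mul_of_monotone_ratio (hpos : ∀ n, 0 < a n)
    (hmono : Monotone fun n => a (n + 1) / a n) {j m : ℕ} (hjm : j ≤ m) :
    a (j + 1) ≤ a (m + 1) / a m * a j :=
  (div_le_iff₀ (hpos j)).1 (hmono hjm)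

theorem sum_mul_succ_sub_le_ratio_mul (hpos : ∀ n, 0 < a n)
    (hmono : Monotone fun n => a (n + 1) / a n) {b : ℕ → 𝕜} {n : ℕ}
    (hb : ∀ k ∈ Icc 1 n, 0 ≤ b k) :
    ∑ k ∈ Icc 1 n, b k * a (n + 1 - k) ≤ a (n + 1) / a n * ∑ k ∈ Icc 1 n, b k * a (n - k) := by
  rw [mul_sum]
  refine sum_le_sum fun k hk => ?_
  rw [Nat.sub_add_comm (mem_Icc.1 hk).2, mul_left_comm]
  exact mul_le_mul_of_nonneg_left
    (le_ratio_mul_of_monotone_ratio hpos hmono (Nat.sub_le n k)) (hb k hk)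

end LogConvex

theorem kaluza_lemma_general
    (a : ℕ → ℝ) (ha0 : a 0 = 1) (hpos : ∀ n, 0 < a n)
    (hratio : ∀ n : ℕ, a (n+1) / a n ≤ a (n+2) / a (n+1))
    (b : ℕ → ℝ)
    (hb : ∀ n : ℕ, 1 ≤ n → a n = ∑ k ∈ Finset.Icc 1 n, b k * a (n - k)) :
    ∀ n : ℕ, 1 ≤ n → 0 ≤ b n := by
  have hmono : Monotone fun n => a (n + 1) / a n := monotone_nat_of_le_succ hratio
  have hconv_le : ∀ n, ∑ k ∈ Icc 1 n, b k * a (n - k) ≤ a n := by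
    rintro (_ | n)
    · simpa using (hpos 0).le
    · exact (hb _ n.succ_pos).ge
  intro n hn
  induction n using Nat.strong_induction_on with
  | _ n ih =>
  obtain ⟨n, rfl⟩ := Nat.exists_eq_add_one_of_ne_zero (Nat.one_le_iff_ne_zero.1 hn)
  have hrec : a (n + 1) = ∑ k ∈ Icc 1 n, b k * a (n + 1 - k) + b (n + 1) := by
    rw [hb (n + 1) n.succ_pos, sum_Icc_succ_top n.succ_pos, Nat.sub_self, ha0, mul_one]
  have hsum : ∑ k ∈ Icc 1 n, b k * a (n + 1 - k) ≤ a (n + 1) :=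
    calc _ ≤ a (n + 1) / a n * ∑ k ∈ Icc 1 n, b k * a (n - k) :=
          sum_mul_succ_sub_le_ratio_mul hpos hmono fun k hk =>
            ih k (Nat.lt_succ_of_le (mem_Icc.1 hk).2) (mem_Icc.1 hk).1
      _ ≤ a (n + 1) / a n * a n :=
          mul_le_mul_of_nonneg_left (hconv_le n) (div_pos (hpos _) (hpos n)).le
      _ = a (n + 1) := div_mul_cancel₀ _ (hpos n).ne'
  linarith

/-- Kaluza's lemma: if `a₀ = 1`, `aₙ > 0`, the ratios `a_{n+1}/aₙ` are nondecreasing, and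
`∑ aₙ zⁿ` has positive radius of convergence, then the coefficients `bₙ` (for `n ≥ 1`) of the
reciprocal power series `1/f(z) = 1 - ∑_{n≥1} bₙ zⁿ` are all nonnegative. Here the `bₙ` are
characterized by the convolution identity `aₙ = ∑_{k=1}^n b_k a_{n-k}` for `n ≥ 1`. -/
theorem kaluza_lemma
    (a : ℕ → ℝ) (ha0 : a 0 = 1) (hpos : ∀ n, 0 < a n)
    (hratio : ∀ n : ℕ, a (n+1) / a n ≤ a (n+2) / a (n+1))
    (hradius : ∃ r : ℝ, 0 < r ∧ Summable (fun n : ℕ => a n * r ^ n))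
    (b : ℕ → ℝ)
    (hb : ∀ n : ℕ, 1 ≤ n → a n = ∑ k ∈ Finset.Icc 1 n, b k * a (n - k)) :
    ∀ n : ℕ, 1 ≤ n → 0 ≤ b n :=
  kaluza_lemma_general a ha0 hpos hratio b hb
end
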